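/- arXiv:2106.10233 — 2 statements merged into one kernel-verified Lean document; each statement's English description precedes it below -/
import Mathlib

section
/- Let k ∈ ℕ and let V be a finite-dimensional nonzero real vector space such that 2^k does not divide dim(V). If every linear operator on every nonzero real vector space of dimension ≤ dim(V) not divisible by 2^k has a true-pair vector, then any two commuting linear operators S, T on V have a common true-pair vector, i.e., there exist a nonzero v ∈ V and reals α, β, γ, δ with ((S - αI)² + β²I)(v) = 0 and ((T - γI)² + δ²I)(v) = 0. -/
/-!
Induction on `dim V`. Take a true-pair vector of `S`, with parameters `α, β`, and put
`p = (S - α)² + β²`, which commutes with `S` and `T`. If `p = 0`, every true-pair vector of `T`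
is a common one. Otherwise `ker p` and `range p` are nonzero proper subspaces invariant under `S`
and `T`; their dimensions add up to `dim V`, so one of them has dimension not divisible by `2 ^ k`,
and the restrictions of `S` and `T` to it have a common true-pair vector by induction.
-/

open Module LinearMap

section InvariantSubspaces

variable {R M : Type*} [Semiring R] [AddCommMonoid M] [Module R M] {f g : End R M}

lemma mapsTo_ker_of_commute (h : Commute f g) : Set.MapsTo g (ker f) (ker f) := by
  intro x hx
  rw [SetLike.mem_coe, mem_ker] at hx ⊢
  rw [← End.mul_apply, h.eq, End.mul_apply, hx, map_zero]

lemma mapsTo_range_of_commute (h : Commute f g) : Set.MapsTo g (range f) (range f) := by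
  rintro _ ⟨y, rfl⟩
  exact ⟨g y, by rw [← End.mul_apply, h.eq, End.mul_apply]⟩

end InvariantSubspaces

section TruePair

variable {V : Type*} [AddCommGroup V] [Module ℝ V]

def truePairOp (L : End ℝ V) (α β : ℝ) : End ℝ V := (L - α • 1) ^ 2 + β ^ 2 • 1

def HasCommonTruePair (S T : End ℝ V) : Prop :=
  ∃ (v : V) (α β γ δ : ℝ), v ≠ 0 ∧ truePairOp S α β v = 0 ∧ truePairOp T γ δ v = 0

lemma Commute.truePairOp_left {S T : End ℝ V} (h : Commute S T) (α β : ℝ) :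
    Commute (truePairOp S α β) T :=
  ((h.sub_left ((Commute.one_left T).smul_left α)).pow_left 2).add_left
    ((Commute.one_left T).smul_left _)

lemma coe_truePairOp_restrict {L : End ℝ V} {U : Submodule ℝ V} (hU : Set.MapsTo L U U)
    (α β : ℝ) (x : U) : (truePairOp (L.restrict hU) α β x : V) = truePairOp L α β x :=
  rfl

lemma HasCommonTruePair.of_restrict {S T : End ℝ V} {U : Submodule ℝ V}
    (hS : Set.MapsTo S U U) (hT : Set.MapsTo T U U)
    (h : HasCommonTruePair (S.restrict hS) (T.restrict hT)) : HasCommonTruePair S T := by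
  obtain ⟨v, α, β, γ, δ, hv, hSv, hTv⟩ := h
  refine ⟨v, α, β, γ, δ, by simpa using hv, ?_, ?_⟩
  · rw [← coe_truePairOp_restrict hS, hSv, Submodule.coe_zero]
  · rw [← coe_truePairOp_restrict hT, hTv, Submodule.coe_zero]

end TruePair

theorem hasCommonTruePair_of_not_dvd {k n : ℕ}
    (hyp : ∀ (W : Type) [AddCommGroup W] [Module ℝ W] [FiniteDimensional ℝ W],
      0 < finrank ℝ W → finrank ℝ W ≤ n → ¬ 2 ^ k ∣ finrank ℝ W →
      ∀ L : End ℝ W, ∃ (α β : ℝ) (w : W), w ≠ 0 ∧ truePairOp L α β w = 0)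
    {V : Type} [AddCommGroup V] [Module ℝ V] [FiniteDimensional ℝ V]
    (hn : finrank ℝ V ≤ n) (hdvd : ¬ 2 ^ k ∣ finrank ℝ V) {S T : End ℝ V}
    (hST : Commute S T) : HasCommonTruePair S T := by
  induction hd : finrank ℝ V using Nat.strong_induction_on generalizing V with
  | _ d ih =>
  have hpos : 0 < finrank ℝ V := Nat.pos_of_ne_zero fun h => hdvd (h ▸ dvd_zero _)
  obtain ⟨α, β, w, hw, hSw⟩ := hyp V hpos hn hdvd S
  set p := truePairOp S α β
  by_cases hp : p = 0
  · obtain ⟨γ, δ, u, hu, hTu⟩ := hyp V hpos hn hdvd T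
    exact ⟨u, α, β, γ, δ, hu, LinearMap.congr_fun hp u, hTu⟩
  have hpS : Commute p S := (Commute.refl S).truePairOp_left α β
  have hpT : Commute p T := hST.truePairOp_left α β
  have descend (U : Submodule ℝ V) (hS : Set.MapsTo S U U) (hT : Set.MapsTo T U U)
      (hlt : finrank ℝ U < finrank ℝ V) (hU : ¬ 2 ^ k ∣ finrank ℝ U) : HasCommonTruePair S T :=
    .of_restrict hS hT <|
      ih _ (hd ▸ hlt) (hlt.le.trans hn) hU (restrict_commute hST hS hT) rfl
  have hker : 0 < finrank ℝ (ker p) :=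
    Nat.pos_of_ne_zero <|
      Submodule.finrank_eq_zero.not.mpr ((Submodule.ne_bot_iff _).mpr ⟨w, hSw, hw⟩)
  have hrange : 0 < finrank ℝ (range p) :=
    Nat.pos_of_ne_zero (Submodule.finrank_eq_zero.not.mpr (range_eq_bot.not.mpr hp))
  have hrank := finrank_range_add_finrank_ker p
  rcases not_and_or.mp (mt (fun h => dvd_add h.1 h.2) (hrank ▸ hdvd)) with h | h
  · exact descend _ (mapsTo_range_of_commute hpS) (mapsTo_range_of_commute hpT) (by omega) h
  · exact descend _ (mapsTo_ker_of_commute hpS) (mapsTo_ker_of_commute hpT) (by omega) h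

theorem common_true_pair_of_not_dvd_general (k : ℕ) (V : Type) [AddCommGroup V] [Module ℝ V]
    [FiniteDimensional ℝ V]
    (hdvd : ¬ (2 ^ k ∣ Module.finrank ℝ V))
    (hyp : ∀ (W : Type) [AddCommGroup W] [Module ℝ W] [FiniteDimensional ℝ W],
      0 < Module.finrank ℝ W → Module.finrank ℝ W ≤ Module.finrank ℝ V →
      ¬ (2 ^ k ∣ Module.finrank ℝ W) →
      ∀ L : Module.End ℝ W, ∃ (α β : ℝ) (w : W), w ≠ 0 ∧
        (((L - α • 1) ^ 2 + β ^ 2 • 1 : Module.End ℝ W) w) = 0)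
    (S T : Module.End ℝ V) (hcomm : S * T = T * S) :
    ∃ (v : V) (α β γ δ : ℝ), v ≠ 0 ∧
      (((S - α • 1) ^ 2 + β ^ 2 • 1 : Module.End ℝ V) v) = 0 ∧
      (((T - γ • 1) ^ 2 + δ ^ 2 • 1 : Module.End ℝ V) v) = 0 :=
  hasCommonTruePair_of_not_dvd hyp le_rfl hdvd hcomm

theorem common_true_pair_of_not_dvd (k : ℕ) (V : Type) [AddCommGroup V] [Module ℝ V]
    [FiniteDimensional ℝ V] (hV : 0 < Module.finrank ℝ V)
    (hdvd : ¬ (2 ^ k ∣ Module.finrank ℝ V))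
    (hyp : ∀ (W : Type) [AddCommGroup W] [Module ℝ W] [FiniteDimensional ℝ W],
      0 < Module.finrank ℝ W → Module.finrank ℝ W ≤ Module.finrank ℝ V →
      ¬ (2 ^ k ∣ Module.finrank ℝ W) →
      ∀ L : Module.End ℝ W, ∃ (α β : ℝ) (w : W), w ≠ 0 ∧
        (((L - α • 1) ^ 2 + β ^ 2 • 1 : Module.End ℝ W) w) = 0)
    (S T : Module.End ℝ V) (hcomm : S * T = T * S) :
    ∃ (v : V) (α β γ δ : ℝ), v ≠ 0 ∧
      (((S - α • 1) ^ 2 + β ^ 2 • 1 : Module.End ℝ V) v) = 0 ∧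
      (((T - γ • 1) ^ 2 + δ ^ 2 • 1 : Module.End ℝ V) v) = 0 :=
  common_true_pair_of_not_dvd_general k V hdvd hyp S T hcomm
end

section
/- Any two commuting linear operators S, T on a finite-dimensional nonzero real vector space V have a common true-pair vector: there exist a nonzero v ∈ V and real numbers α, β, γ, δ such that ((S - αI)² + β²I)(v) = 0 and ((T - γI)² + δ²I)(v) = 0. -/
/-!
An irreducible real polynomial `q` has a complex root `z`; the minimal polynomial of `z` is an
associate of `q` and divides `(X - re z)² + (im z)²`, which also vanishes at `z`. A monic
irreducible factor of the minimal polynomial of an operator `f` kills a nonzero vector (the image of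
the complementary factor), so every operator on a nonzero invariant subspace of a
finite-dimensional real space has a true-pair vector there. Since `T` commutes with
`g = (S - α)² + β²`, the nonzero subspace `ker g` is `T`-invariant, and a true-pair vector of `T`
inside it works for both operators.
-/

open Polynomial Module

theorem Module.End.exists_irreducible_aeval_apply_eq_zero {K V : Type*} [Field K]
    [AddCommGroup V] [Module K V] [FiniteDimensional K V] [Nontrivial V] (f : End K V) :
    ∃ q : K[X], Irreducible q ∧ ∃ v : V, v ≠ 0 ∧ aeval f q v = 0 := by
  have hf : IsIntegral K f := Algebra.IsIntegral.isIntegral f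
  obtain ⟨q, hq_monic, hq_irr, r, hqr⟩ :=
    exists_monic_irreducible_factor (minpoly K f) (minpoly.not_isUnit K f)
  have hr_monic : r.Monic := hq_monic.of_mul_monic_left (hqr ▸ minpoly.monic hf)
  have hr : aeval f r ≠ 0 := minpoly.aeval_ne_zero_of_dvdNotUnit_minpoly hf hr_monic
    ⟨hr_monic.ne_zero, q, hq_irr.not_isUnit, by rw [hqr, mul_comm]⟩
  obtain ⟨w, hw⟩ := DFunLike.ne_iff.mp hr
  refine ⟨q, hq_irr, aeval f r w, hw, ?_⟩
  rw [← End.mul_apply, ← map_mul, ← hqr, minpoly.aeval, LinearMap.zero_apply]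

theorem Polynomial.exists_dvd_sub_C_sq_add_C_sq {q : ℝ[X]} (hq : Irreducible q) :
    ∃ α β : ℝ, q ∣ (X - C α) ^ 2 + C β ^ 2 := by
  obtain ⟨z, hz⟩ := IsAlgClosed.exists_aeval_eq_zero ℂ q (degree_pos_of_irreducible hq).ne'
  have hz_int : IsIntegral ℝ z := Algebra.IsIntegral.isIntegral z
  have hq_dvd : q ∣ minpoly ℝ z :=
    (minpoly.irreducible hz_int).dvd_symm hq (minpoly.dvd ℝ z hz)
  refine ⟨z.re, z.im, hq_dvd.trans (minpoly.dvd ℝ z ?_)⟩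
  apply Complex.ext <;> simp [sq]

theorem Polynomial.aeval_sub_C_sq_add_C_sq {R A : Type*} [CommRing R] [Ring A] [Algebra R A]
    (a : A) (α β : R) : aeval a ((X - C α) ^ 2 + C β ^ 2) = (a - α • 1) ^ 2 + β ^ 2 • 1 := by
  simp [Algebra.algebraMap_eq_smul_one, _root_.smul_pow]

theorem Module.End.coe_aeval_restrict_apply {R V : Type*} [CommRing R] [AddCommGroup V]
    [Module R V] (f : End R V) {W : Submodule R V} (hW : ∀ x ∈ W, f x ∈ W) (p : R[X])
    (x : W) : (aeval (f.restrict hW) p x : V) = aeval f p x := by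
  induction p using Polynomial.induction_on' with
  | add p q hp hq => simp [hp, hq]
  | monomial n a =>
    simp [aeval_monomial, Algebra.algebraMap_eq_smul_one, End.pow_restrict n hW]

theorem Module.End.exists_mem_sq_sub_add_sq_apply_eq_zero {V : Type*} [AddCommGroup V]
    [Module ℝ V] [FiniteDimensional ℝ V] (f : End ℝ V) {W : Submodule ℝ V}
    (hW : ∀ x ∈ W, f x ∈ W) (hW_ne : W ≠ ⊥) :
    ∃ v ∈ W, v ≠ 0 ∧ ∃ α β : ℝ, ((f - α • 1) ^ 2 + β ^ 2 • 1 : End ℝ V) v = 0 := by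
  have : Nontrivial W := Submodule.nontrivial_iff_ne_bot.mpr hW_ne
  obtain ⟨q, hq_irr, w, hw, hqw⟩ :=
    End.exists_irreducible_aeval_apply_eq_zero (f.restrict hW)
  obtain ⟨α, β, r, hqr⟩ := exists_dvd_sub_C_sq_add_C_sq hq_irr
  refine ⟨w, w.2, by simpa using hw, α, β, ?_⟩
  rw [← aeval_sub_C_sq_add_C_sq, ← f.coe_aeval_restrict_apply hW, hqr, mul_comm, map_mul,
    End.mul_apply, hqw, map_zero, Submodule.coe_zero]

theorem common_true_pair (V : Type*) [AddCommGroup V] [Module ℝ V]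
    [FiniteDimensional ℝ V] (hV : 0 < Module.finrank ℝ V)
    (S T : Module.End ℝ V) (hcomm : S * T = T * S) :
    ∃ (v : V) (α β γ δ : ℝ), v ≠ 0 ∧
      (((S - α • 1) ^ 2 + β ^ 2 • 1 : Module.End ℝ V) v) = 0 ∧
      (((T - γ • 1) ^ 2 + δ ^ 2 • 1 : Module.End ℝ V) v) = 0 := by
  have : Nontrivial V := Module.nontrivial_of_finrank_pos hV
  obtain ⟨v₀, -, hv₀, α, β, hSv₀⟩ :=
    S.exists_mem_sq_sub_add_sq_apply_eq_zero (fun _ _ ↦ Submodule.mem_top) top_ne_bot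
  rw [← aeval_sub_C_sq_add_C_sq] at hSv₀
  set g := aeval S ((X - C α) ^ 2 + C β ^ 2)
  have hTg : Commute T g :=
    Algebra.commute_of_mem_adjoin_singleton_of_commute (aeval_mem_adjoin_singleton ℝ S)
      hcomm.symm
  have hT_ker : ∀ x ∈ LinearMap.ker g, T x ∈ LinearMap.ker g := fun x hx ↦ by
    rw [LinearMap.mem_ker] at hx ⊢
    rw [← End.mul_apply, ← hTg.eq, End.mul_apply, hx, map_zero]
  obtain ⟨v, hv_ker, hv, γ, δ, hTv⟩ := T.exists_mem_sq_sub_add_sq_apply_eq_zero hT_ker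
    ((Submodule.ne_bot_iff _).mpr ⟨v₀, hSv₀, hv₀⟩)
  refine ⟨v, α, β, γ, δ, hv, ?_, hTv⟩
  rwa [← aeval_sub_C_sq_add_C_sq]
end
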